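/- Let (V_n)_{n≥3} be a sequence of real numbers with V_3 = 1 satisfying Zograf's recursion V_n = (1/2)·∑_{i=1}^{n-3} [i(n-i-2)/(n-1)]·C(n-4, i-1)·C(n, i+1)·V_{i+2}·V_{n-i} for all n ≥ 4. Then the formal power series h(x) = ∑_{n≥3} V_n/((n-1)!(n-3)!) · x^{n-1} satisfies the formal differential equation x·h'' − h' = h''·(x·h' − h). -/

import Mathlib

/-!
Write `h = x² g` with `g = ∑ b_j x^j`, `b_j = V_{j+3} / ((j+2)! j!)`. Both sides of the equation
are `x²` times a power series, and comparing coefficients reduces it to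
`(N+1)(N+3) b_{N+1} = ∑_{k+m=N} (k+1)(k+2)(m+1) b_k b_m`. Symmetrizing in `k ↔ m` turns the right
side into `(N+4)/2 · ∑_{k+m=N} (k+1)(m+1) b_k b_m`, which is Zograf's recursion at `n = N + 4`
once the binomial coefficients are absorbed into the factorials.
-/

open PowerSeries Finset
open scoped Nat

section Derivatives

variable {R : Type*}

section CommSemiring

variable [CommSemiring R]

theorem PowerSeries.derivative_X_mul (g : R⟦X⟧) : d⁄dX R (X * g) = g + X * d⁄dX R g := by
  rw [Derivation.leibniz, derivative_X, smul_eq_mul, smul_eq_mul]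
  ring

theorem PowerSeries.derivative_X_sq_mul (g : R⟦X⟧) :
    d⁄dX R (X ^ 2 * g) = X * (2 * g + X * d⁄dX R g) := by
  rw [sq, mul_assoc, derivative_X_mul, derivative_X_mul]
  ring

theorem PowerSeries.coeff_derivative_derivative (f : R⟦X⟧) (n : ℕ) :
    coeff n (d⁄dX R (d⁄dX R f)) = (n + 1) * (n + 2) * coeff (n + 2) f := by
  rw [coeff_derivative, coeff_derivative]
  push_cast
  ring

end CommSemiring

variable [CommRing R]

theorem PowerSeries.X_mul_derivative_X_sq_mul_sub (g : R⟦X⟧) :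
    X * d⁄dX R (X ^ 2 * g) - X ^ 2 * g = X ^ 2 * d⁄dX R (X * g) := by
  rw [derivative_X_sq_mul, derivative_X_mul]
  ring

theorem PowerSeries.X_mul_derivative_derivative_X_sq_mul_sub (g : R⟦X⟧) :
    X * d⁄dX R (d⁄dX R (X ^ 2 * g)) - d⁄dX R (X ^ 2 * g)
      = X ^ 2 * (d⁄dX R (d⁄dX R (X * g)) + d⁄dX R g) := by
  rw [derivative_X_sq_mul, derivative_X_mul, derivative_X_mul, map_add, map_add,
    derivative_X_mul, two_mul, map_add]
  ring

theorem PowerSeries.ode_X_sq_mul_of_coeff (g : R⟦X⟧)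
    (hg : ∀ N : ℕ, ((N : R) + 1) * (N + 3) * coeff (N + 1) g
      = ∑ p ∈ antidiagonal N,
          ((p.1 : R) + 1) * (p.1 + 2) * coeff p.1 g * ((p.2 + 1) * coeff p.2 g)) :
    X * d⁄dX R (d⁄dX R (X ^ 2 * g)) - d⁄dX R (X ^ 2 * g)
      = d⁄dX R (d⁄dX R (X ^ 2 * g)) * (X * d⁄dX R (X ^ 2 * g) - X ^ 2 * g) := by
  rw [X_mul_derivative_X_sq_mul_sub, X_mul_derivative_derivative_X_sq_mul_sub]
  suffices d⁄dX R (d⁄dX R (X * g)) + d⁄dX R g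
      = d⁄dX R (d⁄dX R (X ^ 2 * g)) * d⁄dX R (X * g) by
    rw [this]; ring
  ext N
  rw [map_add, coeff_mul, coeff_derivative_derivative, coeff_succ_X_mul, coeff_derivative]
  have hterm (p : ℕ × ℕ) : coeff p.1 (d⁄dX R (d⁄dX R (X ^ 2 * g))) * coeff p.2 (d⁄dX R (X * g))
      = ((p.1 : R) + 1) * (p.1 + 2) * coeff p.1 g * ((p.2 + 1) * coeff p.2 g) := by
    rw [coeff_derivative_derivative, coeff_X_pow_mul, coeff_derivative, coeff_succ_X_mul]
    ring
  simp only [hterm, ← hg]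
  ring

end Derivatives

theorem Finset.Nat.sum_Icc_one_eq_sum_antidiagonal {M : Type*} [AddCommMonoid M] (f : ℕ → M)
    (N : ℕ) : ∑ i ∈ Icc 1 (N + 1), f i = ∑ p ∈ antidiagonal N, f (p.1 + 1) := by
  rw [Nat.sum_antidiagonal_eq_sum_range_succ_mk, ← Ico_add_one_right_eq_Icc, sum_Ico_eq_sum_range]
  simp only [add_comm 1, add_tsub_cancel_right, Nat.succ_eq_add_one]

theorem two_mul_sum_antidiagonal_symmetrize {R : Type*} [CommRing R] (b : ℕ → R) (N : ℕ) :
    2 * ∑ p ∈ antidiagonal N, ((p.1 : R) + 1) * (p.1 + 2) * b p.1 * ((p.2 + 1) * b p.2)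
      = (N + 4) * ∑ p ∈ antidiagonal N, ((p.1 : R) + 1) * (p.2 + 1) * b p.1 * b p.2 := by
  have hswap := Finset.Nat.sum_antidiagonal_swap (n := N)
    (f := fun p => ((p.1 : R) + 1) * (p.1 + 2) * b p.1 * ((p.2 + 1) * b p.2))
  rw [two_mul]
  nth_rw 1 [← hswap]
  rw [← sum_add_distrib, mul_sum]
  refine sum_congr rfl fun p hp => ?_
  rw [← mem_antidiagonal.mp hp, Prod.fst_swap, Prod.snd_swap]
  push_cast
  ring

theorem Nat.choose_mul_choose_mul_factorials {R : Type*} [CommSemiring R] (k m : ℕ) (x y : R) :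
    ((k + m).choose k : R) * ((k + m + 4).choose (k + 2)) * (x * ((k + 2)! * k !))
      * (y * ((m + 2)! * m !)) = (k + m)! * (k + m + 4)! * x * y := by
  have h₁ := Nat.add_choose_mul_factorial_mul_factorial m k
  have h₂ := Nat.add_choose_mul_factorial_mul_factorial (m + 2) (k + 2)
  rw [add_comm m k] at h₁
  rw [show m + 2 + (k + 2) = k + m + 4 by omega] at h₂
  rw [← h₁, ← h₂]
  push_cast
  ring

/-- The coefficient of `x ^ (j + 2)` in `h`. -/
noncomputable def zografCoeff (V : ℕ → ℝ) (j : ℕ) : ℝ := V (j + 3) / ((j + 2)! * j !)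

theorem eq_zografCoeff_mul (V : ℕ → ℝ) (j : ℕ) :
    V (j + 3) = zografCoeff V j * ((j + 2)! * j !) := by
  rw [zografCoeff, div_mul_cancel₀]
  positivity

theorem zografCoeff_recursion (V : ℕ → ℝ)
    (hrec : ∀ n : ℕ, 4 ≤ n →
      V n = (1 / 2) * ∑ i ∈ Finset.Icc 1 (n - 3),
        ((i * (n - i - 2) : ℕ) : ℝ) / ((n : ℝ) - 1) *
          ((n - 4).choose (i - 1)) * (n.choose (i + 1)) * V (i + 2) * V (n - i))
    (N : ℕ) :
    2 * (((N : ℝ) + 1) * (N + 3) * zografCoeff V (N + 1))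
      = (N + 4) * ∑ p ∈ antidiagonal N,
          ((p.1 : ℝ) + 1) * (p.2 + 1) * zografCoeff V p.1 * zografCoeff V p.2 := by
  have hterm : ∀ p ∈ antidiagonal N,
      (((p.1 + 1) * (N + 4 - (p.1 + 1) - 2) : ℕ) : ℝ) / (((N + 4 : ℕ) : ℝ) - 1) *
        ((N + 4 - 4).choose (p.1 + 1 - 1)) * ((N + 4).choose (p.1 + 1 + 1))
        * V (p.1 + 1 + 2) * V (N + 4 - (p.1 + 1))
      = N ! * (N + 4)! / (N + 3) *
          (((p.1 : ℝ) + 1) * (p.2 + 1) * zografCoeff V p.1 * zografCoeff V p.2) := by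
    rintro ⟨k, m⟩ hp
    rw [HasAntidiagonal.mem_antidiagonal] at hp
    subst hp
    dsimp only
    rw [show k + m + 4 - (k + 1) - 2 = m + 1 by omega, show k + m + 4 - 4 = k + m by omega,
      show k + 1 - 1 = k by omega, show k + m + 4 - (k + 1) = m + 3 by omega,
      eq_zografCoeff_mul V k, eq_zografCoeff_mul V m]
    have hfac := Nat.choose_mul_choose_mul_factorials k m (zografCoeff V k) (zografCoeff V m)
    push_cast at hfac ⊢
    linear_combination ((k + 1) * (m + 1) / ((k : ℝ) + m + 3)) * hfac
  have hV := hrec (N + 4) (by omega)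
  rw [show N + 4 - 3 = N + 1 by omega, Finset.Nat.sum_Icc_one_eq_sum_antidiagonal,
    sum_congr rfl hterm, ← mul_sum, show N + 4 = N + 3 + 1 by rfl,
    eq_zografCoeff_mul V (N + 1), Nat.factorial_succ (N + 3), Nat.factorial_succ N] at hV
  push_cast at hV
  field_simp at hV
  linear_combination hV

theorem zograf_generating_function_ODE_general (V : ℕ → ℝ)
    (hrec : ∀ n : ℕ, 4 ≤ n →
      V n = (1 / 2) * ∑ i ∈ Finset.Icc 1 (n - 3),
        ((i * (n - i - 2) : ℕ) : ℝ) / ((n : ℝ) - 1) *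
          ((n - 4).choose (i - 1)) * (n.choose (i + 1)) * V (i + 2) * V (n - i))
    (h : ℝ⟦X⟧)
    (hh : h = PowerSeries.mk fun m =>
      if 2 ≤ m then V (m + 1) / ((m.factorial : ℝ) * ((m - 2).factorial : ℝ)) else 0) :
    X * d⁄dX ℝ (d⁄dX ℝ h) - d⁄dX ℝ h
      = d⁄dX ℝ (d⁄dX ℝ h) * (X * d⁄dX ℝ h - h) := by
  have hX : h = X ^ 2 * PowerSeries.mk (zografCoeff V) := by
    ext n
    rw [hh, coeff_mk, coeff_X_pow_mul']
    split_ifs with hn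
    · obtain ⟨j, rfl⟩ := Nat.exists_eq_add_of_le' hn
      rw [Nat.add_sub_cancel, coeff_mk, zografCoeff]
    · rfl
  rw [hX]
  refine ode_X_sq_mul_of_coeff _ fun N => ?_
  simp only [coeff_mk]
  linear_combination (zografCoeff_recursion V hrec N
    - two_mul_sum_antidiagonal_symmetrize (zografCoeff V) N) / 2

theorem zograf_generating_function_ODE (V : ℕ → ℝ) (hV3 : V 3 = 1)
    (hrec : ∀ n : ℕ, 4 ≤ n →
      V n = (1 / 2) * ∑ i ∈ Finset.Icc 1 (n - 3),
        ((i * (n - i - 2) : ℕ) : ℝ) / ((n : ℝ) - 1) *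
          ((n - 4).choose (i - 1)) * (n.choose (i + 1)) * V (i + 2) * V (n - i))
    (h : ℝ⟦X⟧)
    (hh : h = PowerSeries.mk fun m =>
      if 2 ≤ m then V (m + 1) / ((m.factorial : ℝ) * ((m - 2).factorial : ℝ)) else 0) :
    X * d⁄dX ℝ (d⁄dX ℝ h) - d⁄dX ℝ h
      = d⁄dX ℝ (d⁄dX ℝ h) * (X * d⁄dX ℝ h - h) :=
  zograf_generating_function_ODE_general V hrec h hh
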